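/- Uniform bound on the auxiliary divided difference: let u solve L_ε u = f with homogeneous initial and boundary data and suppose |f(x,t)| ≤ C₀ and |∂u(x,t)/∂t| ≤ C₀ componentwise on [0,1] × [0,T]. Let û^{n+1} be a twice continuously differentiable solution of (I + (Δt/2) L_{x,ε}) û^{n+1} = (I − (Δt/2) L_{x,ε}) u(·,t_n) + (Δt/2)(f(·,t_n) + f(·,t_{n+1})) on (0,1) with û^{n+1}(0) = û^{n+1}(1) = 0. Then the function φ^{n+1} = (2/Δt)(û^{n+1} − u(·,t_n)) satisfies |φ^{n+1}(x)| ≤ C componentwise for all x ∈ [0,1], where C depends only on C₀ (in particular C is independent of ε, Δt and n). -/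

import Mathlib

/-!
Write `L` for the stationary operator `L_{x,ε}`. Subtracting `(I + (Δt/2) L) u(·,t_n)` from the
scheme shows that `φ = (2/Δt)(û − u(·,t_n))` solves
`(I + (Δt/2) L) φ = f(·,t_n) + f(·,t_{n+1}) − 2 L u(·,t_n)`, and the equation for `u` gives
`L u(·,t_n) = f(·,t_n) − ∂ₜu(·,t_n)`, so the right-hand side is bounded by `6 C₀`.
The operator `I + (Δt/2) L` obeys a maximum principle because `A = (a_{km})` has nonpositive
off-diagonal entries and nonnegative row sums: at a positive maximum of `φ` over `[0,1]` and all
components, `−ε φ_k'' ≥ 0` and `(A φ)_k ≥ (Σ_m a_{km}) φ_k ≥ 0`. Hence `|φ| ≤ 6 C₀`.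
-/

open Set Filter Topology

theorem IsLocalMax.iteratedDeriv_two_nonpos {f : ℝ → ℝ} {x₀ : ℝ} (h : IsLocalMax f x₀)
    (hc : ContinuousAt f x₀) : iteratedDeriv 2 f x₀ ≤ 0 := by
  rw [iteratedDeriv_succ, iteratedDeriv_one]
  by_contra! hpos
  -- By the second derivative test `x₀` would also be a local minimum, so `f` is locally constant.
  have hmin := isLocalMin_of_deriv_deriv_pos hpos h.deriv_eq_zero hc
  have hconst : f =ᶠ[𝓝 x₀] fun _ => f x₀ :=
    (h.and hmin).mono fun x hx => le_antisymm hx.1 hx.2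
  have hderiv : deriv f =ᶠ[𝓝 x₀] fun _ => 0 :=
    hconst.deriv.trans (Eventually.of_forall fun x => deriv_const x (f x₀))
  exact hpos.ne' (hderiv.deriv_eq.trans (deriv_const x₀ 0))

section ReactionDiffusion

variable {ι : Type*} [Fintype ι]

/-- The operator `L_{x,ε}` of the paper. -/
noncomputable def reactionDiffusionOp (ε : ℝ) (a : ι → ι → ℝ → ℝ) (v : ℝ → ι → ℝ) (x : ℝ)
    (k : ι) : ℝ :=
  -ε * iteratedDeriv 2 (fun z => v z k) x + ∑ m, a k m x * v x m

theorem reactionDiffusionOp_neg (ε : ℝ) (a : ι → ι → ℝ → ℝ) (v : ℝ → ι → ℝ) (x : ℝ) (k : ι) :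
    reactionDiffusionOp ε a (fun z m => -v z m) x k = -reactionDiffusionOp ε a v x k := by
  simp only [reactionDiffusionOp, iteratedDeriv_fun_neg, mul_neg, Finset.sum_neg_distrib]
  ring

theorem reactionDiffusionOp_const_mul_sub (ε c : ℝ) (a : ι → ι → ℝ → ℝ) {v w : ℝ → ι → ℝ}
    {x : ℝ} {k : ι} (hv : ContDiffAt ℝ 2 (fun z => v z k) x)
    (hw : ContDiffAt ℝ 2 (fun z => w z k) x) :
    reactionDiffusionOp ε a (fun z m => c * (v z m - w z m)) x k =
      c * (reactionDiffusionOp ε a v x k - reactionDiffusionOp ε a w x k) := by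
  have hsum : ∑ m, a k m x * (c * (v x m - w x m)) =
      c * (∑ m, a k m x * v x m - ∑ m, a k m x * w x m) := by
    rw [mul_sub, Finset.mul_sum, Finset.mul_sum, ← Finset.sum_sub_distrib]
    exact Finset.sum_congr rfl fun m _ => by ring
  simp only [reactionDiffusionOp, iteratedDeriv_const_mul_field, iteratedDeriv_fun_sub hv hw, hsum]
  ring

theorem exists_forall_le_of_continuousOn_Icc [Nonempty ι] {v : ℝ → ι → ℝ}
    (hv : ∀ k, ContinuousOn (fun x => v x k) (Icc 0 1)) :
    ∃ x₀ ∈ Icc (0 : ℝ) 1, ∃ k₀, ∀ x ∈ Icc (0 : ℝ) 1, ∀ k, v x k ≤ v x₀ k₀ := by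
  choose xk hxk hmax using fun k =>
    isCompact_Icc.exists_isMaxOn (nonempty_Icc.2 zero_le_one) (hv k)
  obtain ⟨k₀, -, hk₀⟩ := Finset.univ.exists_max_image (fun k => v (xk k) k) Finset.univ_nonempty
  exact ⟨xk k₀, hxk k₀, k₀, fun x hx k => (hmax k hx).trans (hk₀ k (Finset.mem_univ k))⟩

variable {ε : ℝ} {a : ι → ι → ℝ → ℝ}

theorem reactionDiffusionOp_nonneg_of_forall_le {v : ℝ → ι → ℝ} (hε : 0 ≤ ε)
    (hoff : ∀ k m, k ≠ m → ∀ x ∈ Icc (0 : ℝ) 1, a k m x ≤ 0)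
    (hrow : ∀ k, ∀ x ∈ Icc (0 : ℝ) 1, 0 ≤ ∑ m, a k m x)
    (hv : ∀ k, ContinuousOn (fun x => v x k) (Icc 0 1)) {x₀ : ℝ} (hx₀ : x₀ ∈ Ioo 0 1) {k₀ : ι}
    (hmax : ∀ x ∈ Icc (0 : ℝ) 1, ∀ k, v x k ≤ v x₀ k₀) (hpos : 0 ≤ v x₀ k₀) :
    0 ≤ reactionDiffusionOp ε a v x₀ k₀ := by
  have hx₀' : x₀ ∈ Icc (0 : ℝ) 1 := Ioo_subset_Icc_self hx₀
  have hIcc : Icc (0 : ℝ) 1 ∈ 𝓝 x₀ := Icc_mem_nhds hx₀.1 hx₀.2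
  have hdiff : 0 ≤ -ε * iteratedDeriv 2 (fun z => v z k₀) x₀ := by
    have hlocal : IsLocalMax (fun z => v z k₀) x₀ :=
      mem_of_superset hIcc fun x hx => hmax x hx k₀
    nlinarith [hlocal.iteratedDeriv_two_nonpos ((hv k₀).continuousAt hIcc)]
  have hreact : (∑ m, a k₀ m x₀) * v x₀ k₀ ≤ ∑ m, a k₀ m x₀ * v x₀ m := by
    rw [Finset.sum_mul]
    refine Finset.sum_le_sum fun m _ => ?_
    rcases eq_or_ne m k₀ with rfl | hm
    · exact le_rfl
    · exact mul_le_mul_of_nonpos_left (hmax x₀ hx₀' m) (hoff k₀ m hm.symm x₀ hx₀')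
  have := mul_nonneg (hrow k₀ x₀ hx₀') hpos
  unfold reactionDiffusionOp
  linarith

theorem le_of_add_mul_reactionDiffusionOp_le {c B : ℝ} {v : ℝ → ι → ℝ} (hε : 0 ≤ ε)
    (hc : 0 ≤ c) (hB : 0 ≤ B) (hoff : ∀ k m, k ≠ m → ∀ x ∈ Icc (0 : ℝ) 1, a k m x ≤ 0)
    (hrow : ∀ k, ∀ x ∈ Icc (0 : ℝ) 1, 0 ≤ ∑ m, a k m x)
    (hv : ∀ k, ContinuousOn (fun x => v x k) (Icc 0 1))
    (hL : ∀ x ∈ Ioo (0 : ℝ) 1, ∀ k, v x k + c * reactionDiffusionOp ε a v x k ≤ B)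
    (h0 : ∀ k, v 0 k ≤ B) (h1 : ∀ k, v 1 k ≤ B) :
    ∀ x ∈ Icc (0 : ℝ) 1, ∀ k, v x k ≤ B := by
  by_contra! hcon
  obtain ⟨x, hx, k, hxk⟩ := hcon
  have : Nonempty ι := ⟨k⟩
  obtain ⟨x₀, hx₀, k₀, hmax⟩ := exists_forall_le_of_continuousOn_Icc hv
  have hS : B < v x₀ k₀ := hxk.trans_le (hmax x hx k)
  have hx₀' : x₀ ∈ Ioo (0 : ℝ) 1 := by
    refine ⟨hx₀.1.lt_of_ne ?_, hx₀.2.lt_of_ne ?_⟩ <;> rintro rfl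
    exacts [(h0 k₀).not_gt hS, (h1 k₀).not_gt hS]
  have := reactionDiffusionOp_nonneg_of_forall_le hε hoff hrow hv hx₀' hmax (hB.trans hS.le)
  nlinarith [hL x₀ hx₀' k₀]

theorem abs_le_of_abs_add_mul_reactionDiffusionOp_le {c B : ℝ} {v : ℝ → ι → ℝ} (hε : 0 ≤ ε)
    (hc : 0 ≤ c) (hB : 0 ≤ B) (hoff : ∀ k m, k ≠ m → ∀ x ∈ Icc (0 : ℝ) 1, a k m x ≤ 0)
    (hrow : ∀ k, ∀ x ∈ Icc (0 : ℝ) 1, 0 ≤ ∑ m, a k m x)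
    (hv : ∀ k, ContinuousOn (fun x => v x k) (Icc 0 1))
    (hL : ∀ x ∈ Ioo (0 : ℝ) 1, ∀ k, |v x k + c * reactionDiffusionOp ε a v x k| ≤ B)
    (h0 : ∀ k, |v 0 k| ≤ B) (h1 : ∀ k, |v 1 k| ≤ B) :
    ∀ x ∈ Icc (0 : ℝ) 1, ∀ k, |v x k| ≤ B := by
  have hupper := le_of_add_mul_reactionDiffusionOp_le hε hc hB hoff hrow hv
    (fun x hx k => (le_abs_self _).trans (hL x hx k))
    (fun k => (le_abs_self _).trans (h0 k)) (fun k => (le_abs_self _).trans (h1 k))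
  have hlower := le_of_add_mul_reactionDiffusionOp_le (v := fun x k => -v x k) hε hc hB hoff hrow
    (fun k => (hv k).neg)
    (fun x hx k => by
      rw [reactionDiffusionOp_neg]
      linarith [neg_le_abs (v x k + c * reactionDiffusionOp ε a v x k), hL x hx k])
    (fun k => (neg_le_abs _).trans (h0 k)) (fun k => (neg_le_abs _).trans (h1 k))
  exact fun x hx k => abs_le.2 ⟨by linarith [hlower x hx k], hupper x hx k⟩

theorem reactionDiffusionOp_eq_zero {v : ℝ → ι → ℝ} (hv : ∀ x ∈ Icc (0 : ℝ) 1, ∀ k, v x k = 0)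
    {x : ℝ} (hx : x ∈ Ioo 0 1) (k : ι) : reactionDiffusionOp ε a v x k = 0 := by
  have hloc : (fun z => v z k) =ᶠ[𝓝 x] fun _ => 0 :=
    mem_of_superset (Icc_mem_nhds hx.1 hx.2) fun z hz => hv z hz k
  simp [reactionDiffusionOp, hloc.iteratedDeriv_eq 2, hv x (Ioo_subset_Icc_self hx)]

theorem abs_reactionDiffusionOp_le_of_solution {C₀ T t x : ℝ} {u f : ℝ → ℝ → ι → ℝ}
    (hC₀ : 0 ≤ C₀) (hf : ∀ k, |f x t k| ≤ C₀) (hut : ∀ k, |deriv (fun s => u x s k) t| ≤ C₀)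
    (hpde : ∀ x ∈ Ioo (0 : ℝ) 1, ∀ t ∈ Ioc (0 : ℝ) T, ∀ k,
      deriv (fun s => u x s k) t - ε * iteratedDeriv 2 (fun z => u z t k) x
        + ∑ m, a k m x * u x t m = f x t k)
    (hu0 : ∀ x ∈ Icc (0 : ℝ) 1, ∀ k, u x 0 k = 0) (ht : t ∈ Icc 0 T) (hx : x ∈ Ioo 0 1) (k : ι) :
    |reactionDiffusionOp ε a (fun z => u z t) x k| ≤ 2 * C₀ := by
  rcases ht.1.eq_or_lt with rfl | htpos
  · rw [reactionDiffusionOp_eq_zero hu0 hx, abs_zero]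
    positivity
  · have hL : reactionDiffusionOp ε a (fun z => u z t) x k = f x t k - deriv (fun s => u x s k) t := by
      unfold reactionDiffusionOp
      linarith [hpde x hx t ⟨htpos, ht.2⟩ k]
    rw [hL]
    linarith [abs_sub (f x t k) (deriv (fun s => u x s k) t), hf k, hut k]

theorem add_mul_reactionDiffusionOp_divDiff_eq {Δt g x : ℝ} {k : ι} {v w : ℝ → ι → ℝ}
    (hΔt : Δt ≠ 0) (hv : ContDiffAt ℝ 2 (fun z => v z k) x)
    (hw : ContDiffAt ℝ 2 (fun z => w z k) x)
    (h : w x k + Δt / 2 * reactionDiffusionOp ε a w x k =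
      v x k - Δt / 2 * reactionDiffusionOp ε a v x k + Δt / 2 * g) :
    2 / Δt * (w x k - v x k) +
        Δt / 2 * reactionDiffusionOp ε a (fun z m => 2 / Δt * (w z m - v z m)) x k =
      g - 2 * reactionDiffusionOp ε a v x k := by
  have hdiff : 2 / Δt * (w x k - v x k) =
      g - reactionDiffusionOp ε a w x k - reactionDiffusionOp ε a v x k := by
    field_simp
    linarith
  rw [reactionDiffusionOp_const_mul_sub _ _ _ hw hv, hdiff]
  field_simp
  ring

end ReactionDiffusion
theorem stmt_7
    (C₀ : ℝ) (hC₀ : 0 ≤ C₀) :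
    ∃ C : ℝ, ∀ (M : ℕ), 2 ≤ M → ∀ (βs : ℝ), 0 < βs →
    ∀ a : Fin M → Fin M → ℝ → ℝ,
      (∀ k m, ContinuousOn (a k m) (Set.Icc 0 1)) →
      (∀ k m, k ≠ m → ∀ x ∈ Set.Icc (0:ℝ) 1, a k m x ≤ 0) →
      (∀ k, ∀ x ∈ Set.Icc (0:ℝ) 1, 0 < a k k x) →
      (∀ k, ∀ x ∈ Set.Icc (0:ℝ) 1, βs ≤ ∑ m, a k m x) →
    ∀ (T : ℝ), 0 < T → ∀ ε ∈ Set.Ioc (0:ℝ) 1, ∀ Δt : ℝ, 0 < Δt →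
    ∀ n : ℕ, (n * Δt + Δt ≤ T) →
    ∀ (u : ℝ → ℝ → Fin M → ℝ) (f : ℝ → ℝ → Fin M → ℝ) (uhat : ℝ → Fin M → ℝ),
      (∀ k t, ContDiff ℝ 2 (fun x => u x t k)) →
      (∀ k x, ContDiff ℝ 1 (fun t => u x t k)) →
      (∀ x ∈ Set.Icc (0:ℝ) 1, ∀ t ∈ Set.Icc (0:ℝ) T, ∀ k, |f x t k| ≤ C₀) →
      (∀ x ∈ Set.Icc (0:ℝ) 1, ∀ t ∈ Set.Icc (0:ℝ) T, ∀ k,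
        |deriv (fun s => u x s k) t| ≤ C₀) →
      (∀ x ∈ Set.Ioo (0:ℝ) 1, ∀ t ∈ Set.Ioc (0:ℝ) T, ∀ k,
        deriv (fun s => u x s k) t - ε * iteratedDeriv 2 (fun z => u z t k) x
          + ∑ m, a k m x * u x t m = f x t k) →
      (∀ t ∈ Set.Icc (0:ℝ) T, ∀ k, u 0 t k = 0 ∧ u 1 t k = 0) →
      (∀ x ∈ Set.Icc (0:ℝ) 1, ∀ k, u x 0 k = 0) →
      (∀ k, ContDiff ℝ 2 (fun x => uhat x k)) →
      (∀ x ∈ Set.Ioo (0:ℝ) 1, ∀ k,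
        uhat x k + (Δt/2) * (-ε * iteratedDeriv 2 (fun z => uhat z k) x
            + ∑ m, a k m x * uhat x m)
          = u x (n * Δt) k - (Δt/2) * (-ε * iteratedDeriv 2 (fun z => u z (n * Δt) k) x
              + ∑ m, a k m x * u x (n * Δt) m)
            + (Δt/2) * (f x (n * Δt) k + f x (n * Δt + Δt) k)) →
      (∀ k, uhat 0 k = 0 ∧ uhat 1 k = 0) →
      ∀ x ∈ Set.Icc (0:ℝ) 1, ∀ k,
        |(2/Δt) * (uhat x k - u x (n * Δt) k)| ≤ C := by
  refine ⟨6 * C₀, ?_⟩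
  intro M _ βs hβs a _ hoff _ hrow T _ ε hε Δt hΔt n hnT u f uhat huC2 _ hfb hutb hpde hubd hu0
    huhatC2 hhat huhatbd
  have htn : (n : ℝ) * Δt ∈ Icc 0 T := ⟨by positivity, by linarith⟩
  have htn' : (n : ℝ) * Δt + Δt ∈ Icc 0 T := ⟨by positivity, hnT⟩
  refine abs_le_of_abs_add_mul_reactionDiffusionOp_le
    (v := fun x k => 2 / Δt * (uhat x k - u x (n * Δt) k)) hε.1.le (half_pos hΔt).le
    (by positivity) hoff (fun k x hx => hβs.le.trans (hrow k x hx))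
    (fun k => (continuous_const.mul
      ((huhatC2 k).continuous.sub (huC2 k _).continuous)).continuousOn)
    (fun x hx k => ?_)
    (fun k => by simp [(huhatbd k).1, (hubd _ htn k).1]; positivity)
    (fun k => by simp [(huhatbd k).2, (hubd _ htn k).2]; positivity)
  have hxI := Ioo_subset_Icc_self hx
  rw [add_mul_reactionDiffusionOp_divDiff_eq hΔt.ne' (huC2 k _).contDiffAt
    (huhatC2 k).contDiffAt (hhat x hx k)]
  have hLu := abs_reactionDiffusionOp_le_of_solution hC₀ (hfb x hxI _ htn) (hutb x hxI _ htn)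
    hpde hu0 htn hx k
  have hfn := hfb x hxI _ htn k
  have hfn' := hfb x hxI _ htn' k
  rw [abs_le] at hLu hfn hfn' ⊢
  constructor <;> linarith
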